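/- Let L := Φ(−q⁹)² + 2q·Φ(−q⁹)·X(−q³) + 4q²·X(−q³)² and M := P(q³)² − q·Ψ(q⁹)·P(q³) + q²·Ψ(q⁹)², as formal power series in q, and write L⁴M⁴ = ∑_{m≥0} c_m q^m. Then the series ∑_{n≥0} c_{3n+2} q^{3n+2} equals 2·3²·q²·(q⁶;q⁶)_∞⁶(q⁹;q⁹)_∞²⁶/((q³;q³)_∞⁶(q¹⁸;q¹⁸)_∞¹⁰) + 8·3²·q⁵·(q⁶;q⁶)_∞³(q⁹;q⁹)_∞¹⁷/((q³;q³)_∞³(q¹⁸;q¹⁸)_∞) + 19·3³·q⁸·(q⁹;q⁹)_∞⁸(q¹⁸;q¹⁸)_∞⁸ − 64·3²·q¹¹·(q³;q³)_∞³(q¹⁸;q¹⁸)_∞¹⁷/((q⁶;q⁶)_∞³(q⁹;q⁹)_∞) + 128·3²·q¹⁴·(q³;q³)_∞⁶(q¹⁸;q¹⁸)_∞²⁶/((q⁶;q⁶)_∞⁶(q⁹;q⁹)_∞¹⁰). -/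

import Mathlib

/-!
Write `ηₖ = (qᵏ;qᵏ)_∞` and `V = η₁η₆³/(η₂η₃³)`. Comparing eta quotients gives
`X(-q) = V·Φ(-q³)` and `Ψ(q³) = V·P(q)`, so with `t = q·V(q³)` we get `L = Φ(-q⁹)²(1 + 2t + 4t²)`,
`M = P(q³)²(1 - t + t²)` and `L⁴M⁴ = Φ(-q⁹)⁸P(q³)⁸·((1 + 2t + 4t²)(1 - t + t²))⁴`.
Apart from the powers of `q`, every factor is a series in `q³`, so the terms of exponent
`≡ 2 (mod 3)` come from the monomials `t²`, `t⁵`, `t⁸`, `t¹¹`, `t¹⁴` of the polynomial, with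
coefficients `18, 72, 513, -576, 1152`; and `Φ(-q⁹)⁸P(q³)⁸V(q³)^(3m+2)` is the stated eta quotient.
-/

open PowerSeries

/-- The infinite product `(q^j; q^k)_∞ = ∏_{n ≥ 0} (1 - q^(j + k*n))` as a formal power
series over `ℤ`: for `j ≥ 1` its `n`-th coefficient is the (stable) `n`-th coefficient
of the partial products `∏_{m < n+1} (1 - q^(j + k*m))`. -/
noncomputable def qp (j k : ℕ) : PowerSeries ℤ :=
  PowerSeries.mk fun n =>
    PowerSeries.coeff n
      (∏ m ∈ Finset.range (n + 1), (1 - (PowerSeries.X : PowerSeries ℤ) ^ (j + k * m)))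

/-- Substitution of `q^k` for `q` in a formal power series (for `k ≥ 1`). -/
noncomputable def substQ (k : ℕ) (f : PowerSeries ℤ) : PowerSeries ℤ :=
  PowerSeries.mk fun n => if k ∣ n then PowerSeries.coeff (n / k) f else 0

/-- `Φ(-q) = (q;q)_∞² / (q²;q²)_∞`. -/
noncomputable def Phi : PowerSeries ℤ := qp 1 1 ^ 2 * Ring.inverse (qp 2 2)

/-- `Ψ(q) = (q²;q²)_∞ / (q;q²)_∞`. -/
noncomputable def Psi : PowerSeries ℤ := qp 2 2 * Ring.inverse (qp 1 2)

/-- `P(q) = (q²;q⁶)_∞ (q⁴;q⁶)_∞ (q³;q³)_∞² / (q;q)_∞`. -/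
noncomputable def Pq : PowerSeries ℤ := qp 2 6 * qp 4 6 * qp 3 3 ^ 2 * Ring.inverse (qp 1 1)

/-- `X(-q) = (q;q)_∞ (q⁶;q⁶)_∞² / ((q²;q²)_∞ (q³;q³)_∞)`. -/
noncomputable def Xq : PowerSeries ℤ := qp 1 1 * qp 6 6 ^ 2 * Ring.inverse (qp 2 2 * qp 3 3)

/-- `Φ(-q³)` -/ noncomputable def Phi3 : PowerSeries ℤ := substQ 3 Phi
/-- `Φ(-q⁹)` -/ noncomputable def Phi9 : PowerSeries ℤ := substQ 9 Phi
/-- `Ψ(q³)` -/ noncomputable def Psi3 : PowerSeries ℤ := substQ 3 Psi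
/-- `Ψ(q⁹)` -/ noncomputable def Psi9 : PowerSeries ℤ := substQ 9 Psi
/-- `P(q³)` -/ noncomputable def P3 : PowerSeries ℤ := substQ 3 Pq
/-- `X(-q³)` -/ noncomputable def X3 : PowerSeries ℤ := substQ 3 Xq

/-- `L = Φ(-q⁹)² + 2q·Φ(-q⁹)·X(-q³) + 4q²·X(-q³)²` -/
noncomputable def L : PowerSeries ℤ :=
  Phi9 ^ 2 + 2 * (PowerSeries.X : PowerSeries ℤ) * Phi9 * X3 + 4 * (PowerSeries.X : PowerSeries ℤ) ^ 2 * X3 ^ 2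

/-- `M = P(q³)² - q·Ψ(q⁹)·P(q³) + q²·Ψ(q⁹)²` -/
noncomputable def M : PowerSeries ℤ :=
  P3 ^ 2 - (PowerSeries.X : PowerSeries ℤ) * Psi9 * P3 + (PowerSeries.X : PowerSeries ℤ) ^ 2 * Psi9 ^ 2

open Finset
open scoped Ring

theorem map_ringInverse {F R S : Type*} [MonoidWithZero R] [MonoidWithZero S] [FunLike F R S]
    [MonoidHomClass F R S] (f : F) {a : R} (ha : IsUnit a) : f a⁻¹ʳ = (f a)⁻¹ʳ := by
  calc f a⁻¹ʳ = f a⁻¹ʳ * (f a * (f a)⁻¹ʳ) := by rw [Ring.mul_inverse_cancel _ (ha.map f), mul_one]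
    _ = f (a⁻¹ʳ * a) * (f a)⁻¹ʳ := by rw [map_mul, mul_assoc]
    _ = (f a)⁻¹ʳ := by rw [Ring.inverse_mul_cancel _ ha, map_one, one_mul]

theorem PowerSeries.eq_of_forall_sModEq {R : Type*} [CommRing R] {f g : PowerSeries R}
    (h : ∀ N, f ≡ g [SMOD Ideal.span {(X : PowerSeries R) ^ N}]) : f = g := by
  ext n
  have := X_pow_dvd_iff.mp (Ideal.mem_span_singleton.mp (SModEq.sub_mem.mp (h (n + 1)))) n
    (Nat.lt_succ_self n)
  rwa [map_sub, sub_eq_zero] at this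

theorem expand_sModEq {R : Type*} [CommRing R] {k : ℕ} (hk : k ≠ 0) {f g : PowerSeries R}
    {N : ℕ} (h : f ≡ g [SMOD Ideal.span {(X : PowerSeries R) ^ N}]) :
    expand k hk f ≡ expand k hk g [SMOD Ideal.span {(X : PowerSeries R) ^ N}] := by
  rw [SModEq.sub_mem, Ideal.mem_span_singleton] at h ⊢
  have := map_dvd (expand k hk) h
  rw [map_sub, map_pow, expand_X, ← pow_mul] at this
  exact (pow_dvd_pow X (Nat.le_mul_of_pos_left N (Nat.pos_of_ne_zero hk))).trans this

noncomputable def qpPartial (j k N : ℕ) : PowerSeries ℤ :=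
  ∏ m ∈ range N, (1 - X ^ (j + k * m))

theorem X_pow_dvd_qpPartial_sub {j k N M : ℕ} (hk : 0 < k) (hN : N ≤ M) :
    X ^ N ∣ qpPartial j k M - qpPartial j k N := by
  induction M, hN using Nat.le_induction with
  | base => simp
  | succ M hN ih =>
    have hX : (X : PowerSeries ℤ) ^ N ∣ X ^ (j + k * M) := pow_dvd_pow X (by nlinarith)
    have hsucc : qpPartial j k (M + 1) - qpPartial j k N =
        (qpPartial j k M - qpPartial j k N) - qpPartial j k M * X ^ (j + k * M) := by
      rw [qpPartial, prod_range_succ, ← qpPartial]; ring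
    rw [hsucc]
    exact dvd_sub ih (dvd_mul_of_dvd_right hX _)

theorem qp_sModEq_qpPartial {k : ℕ} (hk : 0 < k) (j : ℕ) {N M : ℕ} (hN : N ≤ M) :
    qp j k ≡ qpPartial j k M [SMOD Ideal.span {(X : PowerSeries ℤ) ^ N}] := by
  rw [SModEq.sub_mem, Ideal.mem_span_singleton, X_pow_dvd_iff]
  intro n hn
  have h := X_pow_dvd_iff.mp (X_pow_dvd_qpPartial_sub (j := j) hk (show n + 1 ≤ M by omega)) n
    (Nat.lt_succ_self n)
  rw [map_sub] at h ⊢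
  rw [qp, coeff_mk, ← qpPartial]
  linarith

theorem qpPartial_mul_eq_prod (j k r N : ℕ) :
    qpPartial j k (r * N) = ∏ i ∈ range r, qpPartial (j + k * i) (r * k) N := by
  induction N with
  | zero => simp [qpPartial]
  | succ N ih =>
    rw [Nat.mul_succ, qpPartial, prod_range_add, ← qpPartial, ih]
    simp only [qpPartial, prod_range_succ, prod_mul_distrib]
    congr 1
    refine prod_congr rfl fun i _ => ?_
    ring_nf

theorem qp_eq_prod_qp {k r : ℕ} (hk : 0 < k) (hr : 0 < r) (j : ℕ) :
    qp j k = ∏ i ∈ range r, qp (j + k * i) (r * k) := by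
  refine PowerSeries.eq_of_forall_sModEq fun N => ?_
  have hpart := qp_sModEq_qpPartial hk j (Nat.le_mul_of_pos_left N hr)
  rw [qpPartial_mul_eq_prod] at hpart
  exact hpart.trans (SModEq.prod fun i _ => qp_sModEq_qpPartial (by positivity) _ le_rfl).symm

theorem isUnit_qp {j : ℕ} (hj : 0 < j) (k : ℕ) : IsUnit (qp j k) := by
  rw [isUnit_iff_constantCoeff, ← coeff_zero_eq_constantCoeff_apply]
  simp [qp, hj.ne']

theorem substQ_eq_expand {k : ℕ} (hk : k ≠ 0) (f : PowerSeries ℤ) :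
    substQ k f = expand k hk f := by
  ext n
  rw [substQ, coeff_mk, coeff_expand]

theorem expand_qpPartial {k : ℕ} (hk : k ≠ 0) (j l N : ℕ) :
    expand k hk (qpPartial j l N) = qpPartial (k * j) (k * l) N := by
  simp only [qpPartial, map_prod, map_sub, map_one, map_pow, expand_X, ← pow_mul]
  refine prod_congr rfl fun m _ => ?_
  ring_nf

theorem expand_qp {k l : ℕ} (hk : k ≠ 0) (hl : 0 < l) (j : ℕ) :
    expand k hk (qp j l) = qp (k * j) (k * l) := by
  refine PowerSeries.eq_of_forall_sModEq fun N => ?_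
  have h := expand_sModEq hk (qp_sModEq_qpPartial hl j (le_refl N))
  rw [expand_qpPartial] at h
  exact h.trans (qp_sModEq_qpPartial (by positivity) _ le_rfl).symm

theorem expand_ringInverse_qp {k j l : ℕ} (hk : k ≠ 0) (hj : 0 < j) (hl : 0 < l) :
    expand k hk (qp j l)⁻¹ʳ = (qp (k * j) (k * l))⁻¹ʳ := by
  rw [map_ringInverse _ (isUnit_qp hj l), expand_qp hk hl]

theorem Phi3_eq_qp : Phi3 = qp 3 3 ^ 2 * (qp 6 6)⁻¹ʳ := by
  simp [Phi3, Phi, substQ_eq_expand three_ne_zero, expand_qp, expand_ringInverse_qp]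

theorem Phi9_eq_expand : Phi9 = expand 3 three_ne_zero Phi3 := by
  rw [Phi9, Phi3, substQ_eq_expand three_ne_zero, ← expand_mul, ← substQ_eq_expand]

theorem Psi9_eq_expand : Psi9 = expand 3 three_ne_zero Psi3 := by
  rw [Psi9, Psi3, substQ_eq_expand three_ne_zero, ← expand_mul, ← substQ_eq_expand]

noncomputable def Vq : PowerSeries ℤ := qp 1 1 * qp 6 6 ^ 3 * (qp 2 2 * qp 3 3 ^ 3)⁻¹ʳ

section FractionField

local notation "K" => FractionRing (PowerSeries ℤ)

theorem algebraMap_qp_ne_zero {j : ℕ} (hj : 0 < j) (k : ℕ) :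
    algebraMap (PowerSeries ℤ) K (qp j k) ≠ 0 :=
  ((isUnit_qp hj k).map _).ne_zero

theorem algebraMap_eta_ne_zero : algebraMap (PowerSeries ℤ) K (qp 1 1) ≠ 0 ∧
    algebraMap (PowerSeries ℤ) K (qp 2 2) ≠ 0 ∧ algebraMap (PowerSeries ℤ) K (qp 3 3) ≠ 0 ∧
    algebraMap (PowerSeries ℤ) K (qp 6 6) ≠ 0 :=
  ⟨algebraMap_qp_ne_zero (by norm_num) _, algebraMap_qp_ne_zero (by norm_num) _,
    algebraMap_qp_ne_zero (by norm_num) _, algebraMap_qp_ne_zero (by norm_num) _⟩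

theorem algebraMap_ringInverse_qp {j : ℕ} (hj : 0 < j) (k : ℕ) :
    algebraMap (PowerSeries ℤ) K (qp j k)⁻¹ʳ = (algebraMap (PowerSeries ℤ) K (qp j k))⁻¹ := by
  rw [map_ringInverse _ (isUnit_qp hj k), Ring.inverse_eq_inv]

theorem Psi_eq_qp : Psi = qp 2 2 ^ 2 * (qp 1 1)⁻¹ʳ := by
  have hsplit : qp 1 1 = qp 1 2 * qp 2 2 := by
    simpa [prod_range_succ] using qp_eq_prod_qp (j := 1) one_pos (r := 1 + 1) two_pos
  rw [Psi, hsplit]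
  apply IsFractionRing.injective (PowerSeries ℤ) K
  have h₁₂ := algebraMap_qp_ne_zero one_pos 2
  have h₂ := algebraMap_eta_ne_zero.2.1
  simp only [Ring.mul_inverse_rev, map_mul, map_pow, algebraMap_ringInverse_qp, Nat.ofNat_pos,
    zero_lt_one]
  field_simp

theorem Psi3_eq_qp : Psi3 = qp 6 6 ^ 2 * (qp 3 3)⁻¹ʳ := by
  simp [Psi3, Psi_eq_qp, substQ_eq_expand three_ne_zero, expand_qp, expand_ringInverse_qp]

theorem Pq_eq_qp : Pq = qp 2 2 * qp 3 3 ^ 2 * (qp 1 1 * qp 6 6)⁻¹ʳ := by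
  have hsplit : qp 2 2 = qp 2 6 * qp 4 6 * qp 6 6 := by
    simpa [prod_range_succ] using qp_eq_prod_qp (j := 2) two_pos (r := 1 + 1 + 1) three_pos
  rw [Pq, hsplit]
  apply IsFractionRing.injective (PowerSeries ℤ) K
  obtain ⟨h₁, -, -, h₆⟩ := algebraMap_eta_ne_zero
  simp only [Ring.mul_inverse_rev, map_mul, map_pow, algebraMap_ringInverse_qp, Nat.ofNat_pos,
    zero_lt_one]
  field_simp

theorem Xq_eq_Vq_mul_Phi3 : Xq = Vq * Phi3 := by
  rw [Xq, Vq, Phi3_eq_qp]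
  apply IsFractionRing.injective (PowerSeries ℤ) K
  obtain ⟨h₁, h₂, h₃, h₆⟩ := algebraMap_eta_ne_zero
  simp only [Ring.mul_inverse_rev, ← Ring.inverse_pow, map_mul, map_pow,
    algebraMap_ringInverse_qp, Nat.ofNat_pos]
  field_simp

theorem Psi3_eq_Vq_mul_Pq : Psi3 = Vq * Pq := by
  rw [Psi3_eq_qp, Vq, Pq_eq_qp]
  apply IsFractionRing.injective (PowerSeries ℤ) K
  obtain ⟨h₁, h₂, h₃, h₆⟩ := algebraMap_eta_ne_zero
  simp only [Ring.mul_inverse_rev, ← Ring.inverse_pow, map_mul, map_pow,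
    algebraMap_ringInverse_qp, Nat.ofNat_pos, zero_lt_one]
  field_simp

theorem Phi3_pow_mul_Pq_pow_mul_Vq_sq_mul_eq :
    Phi3 ^ 8 * Pq ^ 8 * Vq ^ 2 * (18 + 72 * (X * Vq ^ 3) + 513 * (X * Vq ^ 3) ^ 2
      - 576 * (X * Vq ^ 3) ^ 3 + 1152 * (X * Vq ^ 3) ^ 4) =
    18 * (qp 2 2 ^ 6 * qp 3 3 ^ 26 * (qp 1 1 ^ 6 * qp 6 6 ^ 10)⁻¹ʳ)
      + 72 * X * (qp 2 2 ^ 3 * qp 3 3 ^ 17 * (qp 1 1 ^ 3 * qp 6 6)⁻¹ʳ)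
      + 513 * X ^ 2 * (qp 3 3 ^ 8 * qp 6 6 ^ 8)
      - 576 * X ^ 3 * (qp 1 1 ^ 3 * qp 6 6 ^ 17 * (qp 2 2 ^ 3 * qp 3 3)⁻¹ʳ)
      + 1152 * X ^ 4 * (qp 1 1 ^ 6 * qp 6 6 ^ 26 * (qp 2 2 ^ 6 * qp 3 3 ^ 10)⁻¹ʳ) := by
  rw [Phi3_eq_qp, Pq_eq_qp, Vq]
  apply IsFractionRing.injective (PowerSeries ℤ) K
  obtain ⟨h₁, h₂, h₃, h₆⟩ := algebraMap_eta_ne_zero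
  simp only [Ring.mul_inverse_rev, ← Ring.inverse_pow, map_mul, map_pow, map_add, map_sub,
    map_ofNat, algebraMap_ringInverse_qp, Nat.ofNat_pos, zero_lt_one]
  field_simp

end FractionField

theorem L_pow_four_mul_M_pow_four :
    L ^ 4 * M ^ 4 =
      X ^ 0 * expand 3 three_ne_zero (Phi3 ^ 8 * Pq ^ 8 * (1 + 32 * (X * Vq ^ 3)
        + 226 * (X * Vq ^ 3) ^ 2 - 152 * (X * Vq ^ 3) ^ 3 + 1328 * (X * Vq ^ 3) ^ 4
        - 512 * (X * Vq ^ 3) ^ 5))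
      + X ^ 1 * expand 3 three_ne_zero (Phi3 ^ 8 * Pq ^ 8 * Vq * (4 + 83 * (X * Vq ^ 3)
        + 76 * (X * Vq ^ 3) ^ 2 + 904 * (X * Vq ^ 3) ^ 3 - 1024 * (X * Vq ^ 3) ^ 4
        + 256 * (X * Vq ^ 3) ^ 5))
      + X ^ 2 * expand 3 three_ne_zero (Phi3 ^ 8 * Pq ^ 8 * Vq ^ 2 * (18 + 72 * (X * Vq ^ 3)
        + 513 * (X * Vq ^ 3) ^ 2 - 576 * (X * Vq ^ 3) ^ 3 + 1152 * (X * Vq ^ 3) ^ 4)) := by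
  rw [L, M, Phi9_eq_expand, Psi9_eq_expand, X3, P3, substQ_eq_expand three_ne_zero,
    substQ_eq_expand three_ne_zero, Xq_eq_Vq_mul_Phi3, Psi3_eq_Vq_mul_Pq]
  simp only [map_add, map_sub, map_mul, map_pow, map_ofNat, map_one, expand_X]
  ring

noncomputable def residuePart {R : Type*} [Semiring R] (k r : ℕ) :
    PowerSeries R →+ PowerSeries R where
  toFun f := mk fun n => if n % k = r then coeff n f else 0
  map_zero' := by ext; simp
  map_add' f g := by ext n; by_cases h : n % k = r <;> simp [h]

theorem coeff_X_pow_mul_expand_of_mod_ne {R : Type*} [CommRing R] {k : ℕ} (hk : k ≠ 0)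
    {i n : ℕ} (h : n % k ≠ i % k) (f : PowerSeries R) :
    coeff n (X ^ i * expand k hk f) = 0 := by
  rw [mul_comm, coeff_mul_X_pow', coeff_expand]
  split_ifs with hi hdvd
  · exact absurd ((Nat.modEq_iff_dvd' hi).mpr hdvd).symm h
  · rfl
  · rfl

theorem residuePart_X_pow_mul_expand {R : Type*} [CommRing R] {k : ℕ} (hk : k ≠ 0) (r i : ℕ)
    (f : PowerSeries R) :
    residuePart k r (X ^ i * expand k hk f) = if i % k = r then X ^ i * expand k hk f else 0 := by
  ext n
  simp only [residuePart, AddMonoidHom.coe_mk, ZeroHom.coe_mk, coeff_mk]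
  by_cases hn : n % k = r <;> by_cases hi : i % k = r
  · simp [hn, hi]
  · simp [hn, hi, coeff_X_pow_mul_expand_of_mod_ne hk (show n % k ≠ i % k by omega)]
  · simp [hn, hi, coeff_X_pow_mul_expand_of_mod_ne hk (show n % k ≠ i % k by omega)]
  · simp [hn, hi]

/-- The terms of `L⁴M⁴` with exponents `≡ 2 (mod 3)`, in q-product form. -/
theorem L4M4_dissection_eval :
    PowerSeries.mk (fun m => if m % 3 = 2 then PowerSeries.coeff m (L ^ 4 * M ^ 4) else 0) =
      2 * 3 ^ 2 * (PowerSeries.X : PowerSeries ℤ) ^ 2 * (qp 6 6 ^ 6 * qp 9 9 ^ 26 * Ring.inverse (qp 3 3 ^ 6 * qp 18 18 ^ 10))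
      + 8 * 3 ^ 2 * (PowerSeries.X : PowerSeries ℤ) ^ 5 * (qp 6 6 ^ 3 * qp 9 9 ^ 17 * Ring.inverse (qp 3 3 ^ 3 * qp 18 18))
      + 19 * 3 ^ 3 * (PowerSeries.X : PowerSeries ℤ) ^ 8 * (qp 9 9 ^ 8 * qp 18 18 ^ 8)
      + (-(64 * 3 ^ 2) * (PowerSeries.X : PowerSeries ℤ) ^ 11 * (qp 3 3 ^ 3 * qp 18 18 ^ 17 * Ring.inverse (qp 6 6 ^ 3 * qp 9 9)))
      + 128 * 3 ^ 2 * (PowerSeries.X : PowerSeries ℤ) ^ 14 * (qp 3 3 ^ 6 * qp 18 18 ^ 26 * Ring.inverse (qp 6 6 ^ 6 * qp 9 9 ^ 10)) := by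
  change residuePart 3 2 (L ^ 4 * M ^ 4) = _
  rw [L_pow_four_mul_M_pow_four, map_add, map_add, residuePart_X_pow_mul_expand,
    residuePart_X_pow_mul_expand, residuePart_X_pow_mul_expand,
    Phi3_pow_mul_Pq_pow_mul_Vq_sq_mul_eq]
  simp only [Ring.mul_inverse_rev, ← Ring.inverse_pow, map_add, map_sub, map_mul, map_pow,
    map_ofNat, expand_X, expand_qp, expand_ringInverse_qp, Nat.ofNat_pos, zero_lt_one]
  norm_num
  ring
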